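/- arXiv:2509.00667 — 3 statements merged into one kernel-verified Lean document; each statement's English description precedes it below -/
import Mathlib

section
/- Let k be a real quadratic field with trivial narrow ideal class group. Then the obstruction group B_S = V_S/(k^×)² is trivial for every finite set S of finite primes of k (not lying over 2). -/
/-!
Narrow class number one gives every nonzero ideal of `𝓞 k` a totally positive generator. In
particular `𝓞 k` is a PID, so `(a) = J²` forces `a = u b²` with `u` a unit, which is totally
positive because `a` is. Applied to an element with opposite signs at the two real embeddings,
it produces a unit `v` with opposite signs. By Dirichlet's theorem in rank one every unit is
`±εᵐ`, so `v` makes `ε` of mixed signs, and a totally positive unit must then be an even power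
of `ε`, i.e. a square.
-/

open NumberField IsDedekindDomain

theorem FractionalIdeal.exists_unit_smul_pow_eq_of_spanSingleton_eq_pow {R K : Type*}
    [CommRing R] [IsDomain R] [IsPrincipalIdealRing R] [Field K] [Algebra R K]
    [IsFractionRing R K] {a : K} {J : FractionalIdeal (nonZeroDivisors R) K} {n : ℕ}
    (h : FractionalIdeal.spanSingleton (nonZeroDivisors R) a = J ^ n) :
    ∃ (u : Rˣ) (b : K), u • b ^ n = a := by
  obtain ⟨b, rfl⟩ := (FractionalIdeal.isPrincipal_iff J).mp inferInstance
  rw [FractionalIdeal.spanSingleton_pow, eq_comm,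
    FractionalIdeal.spanSingleton_eq_spanSingleton] at h
  obtain ⟨u, hu⟩ := h
  exact ⟨u, b, hu⟩

namespace NumberField

variable {K : Type*} [Field K] [NumberField K]

open InfinitePlace

theorem exists_ringHom_real_ne_of_one_lt_finrank [IsTotallyReal K]
    (h : 1 < Module.finrank ℚ K) : ∃ φ₁ φ₂ : K →+* ℝ, φ₁ ≠ φ₂ := by
  obtain ⟨w₁, w₂, hw⟩ := Fintype.exists_pair_of_one_lt_card (α := InfinitePlace K) (by
    rwa [card_eq_nrRealPlaces_add_nrComplexPlaces, IsTotallyReal.nrComplexPlaces_eq_zero,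
      add_zero, ← IsTotallyReal.finrank])
  have hw₁ := IsTotallyReal.isReal w₁
  have hw₂ := IsTotallyReal.isReal w₂
  refine ⟨embedding_of_isReal hw₁, embedding_of_isReal hw₂, fun he => hw ?_⟩
  ext x
  rw [← norm_embedding_of_isReal hw₁, he, norm_embedding_of_isReal]

theorem exists_neg_pos_of_ringHom_ne {φ₁ φ₂ : K →+* ℝ} (h : φ₁ ≠ φ₂) :
    ∃ x : 𝓞 K, φ₁ x < 0 ∧ 0 < φ₂ x := by
  obtain ⟨y, hy⟩ : ∃ y : 𝓞 K, φ₁ y < φ₂ y := by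
    by_contra! hle
    refine h (IsFractionRing.ringHom_ext (A := 𝓞 K) fun y => le_antisymm ?_ (hle y))
    simpa using hle (-y)
  obtain ⟨q, hq₁, hq₂⟩ := exists_rat_btwn hy
  have hden : (0 : ℝ) < q.den := mod_cast q.den_pos
  rw [Rat.cast_def, lt_div_iff₀ hden] at hq₁
  rw [Rat.cast_def, div_lt_iff₀ hden] at hq₂
  refine ⟨q.den * y - q.num, ?_, ?_⟩ <;> simp only [map_sub, map_mul, map_natCast, map_intCast]
    <;> linarith

theorem exists_unit_neg_pos_of_ringHom_ne
    (hnarrow : ∀ I : Ideal (𝓞 K), I ≠ ⊥ →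
      ∃ g : 𝓞 K, I = Ideal.span {g} ∧ ∀ φ : K →+* ℝ, 0 < φ (algebraMap (𝓞 K) K g))
    {φ₁ φ₂ : K →+* ℝ} (h : φ₁ ≠ φ₂) : ∃ v : (𝓞 K)ˣ, φ₁ v < 0 ∧ 0 < φ₂ v := by
  obtain ⟨x, hx₁, hx₂⟩ := exists_neg_pos_of_ringHom_ne h
  have hx : x ≠ 0 := by rintro rfl; simp at hx₁
  obtain ⟨g, hg, hg_pos⟩ := hnarrow _ (by rwa [ne_eq, Ideal.span_singleton_eq_bot])
  obtain ⟨v, rfl⟩ := Ideal.span_singleton_eq_span_singleton.mp hg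
  have hv₁ := hg_pos φ₁
  have hv₂ := hg_pos φ₂
  rw [map_mul, map_mul] at hv₁ hv₂
  exact ⟨v, neg_of_mul_pos_right hv₁ hx₁.le, pos_of_mul_pos_right hv₂ hx₂.le⟩

namespace Units

theorem rank_eq_one_of_finrank_eq_two [IsTotallyReal K] (h : Module.finrank ℚ K = 2) :
    rank K = 1 := by
  rw [rank, card_eq_nrRealPlaces_add_nrComplexPlaces, IsTotallyReal.nrComplexPlaces_eq_zero,
    add_zero, ← IsTotallyReal.finrank, h]

theorem eq_one_or_neg_one_of_mem_torsion (φ : K →+* ℝ) {ζ : (𝓞 K)ˣ} (hζ : ζ ∈ torsion K) :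
    ζ = 1 ∨ ζ = -1 := by
  obtain ⟨n, hn, hζn⟩ := isOfFinOrder_iff_pow_eq_one.mp hζ
  have : φ ζ ^ n = 1 := by rw [← map_pow, ← coe_pow, hζn, coe_one, map_one]
  rcases (pow_eq_one_iff_of_ne_zero hn.ne').mp this with h | ⟨h, -⟩
  · exact .inl (coe_injective K (φ.injective (h.trans (map_one φ).symm)))
  · exact .inr (coe_injective K (φ.injective (h.trans (by simp))))

theorem exists_forall_eq_sq_or (hrank : rank K = 1) (φ : K →+* ℝ) :
    ∃ ε : (𝓞 K)ˣ, ∀ u : (𝓞 K)ˣ, ∃ w : (𝓞 K)ˣ,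
      u = w ^ 2 ∨ u = -w ^ 2 ∨ u = ε * w ^ 2 ∨ u = -(ε * w ^ 2) := by
  have : Subsingleton (Fin (rank K)) := by rw [hrank]; infer_instance
  let i₀ : Fin (rank K) := ⟨0, by omega⟩
  refine ⟨fundSystem K i₀, fun u => ?_⟩
  obtain ⟨⟨ζ, e⟩, hu, -⟩ := exist_unique_eq_mul_prod K u
  rw [Fintype.prod_subsingleton _ i₀] at hu
  obtain ⟨j, hj | hj⟩ := Int.even_or_odd' (e i₀) <;>
  refine ⟨fundSystem K i₀ ^ j, ?_⟩ <;>
  rcases eq_one_or_neg_one_of_mem_torsion φ ζ.2 with hζ | hζ <;>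
  simp [hu, hζ, hj, zpow_add, zpow_mul, mul_comm]

theorem isSquare_of_pos_pos_of_neg_pos (hrank : rank K = 1) {φ₁ φ₂ : K →+* ℝ} {v : (𝓞 K)ˣ}
    (hv₁ : φ₁ v < 0) (hv₂ : 0 < φ₂ v) {z : (𝓞 K)ˣ} (hz₁ : 0 < φ₁ z) (hz₂ : 0 < φ₂ z) :
    IsSquare z := by
  have hsq_pos (φ : K →+* ℝ) (w : (𝓞 K)ˣ) : 0 < φ w ^ 2 :=
    pow_two_pos_of_ne_zero ((map_ne_zero φ).mpr (coe_ne_zero w))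
  obtain ⟨ε, hε⟩ := exists_forall_eq_sq_or hrank φ₁
  -- `v` forces `ε` to have mixed signs, which leaves `z = w ^ 2` as the only possible shape.
  have hε_mixed : φ₁ ε * φ₂ ε < 0 := by
    obtain ⟨w, rfl | rfl | rfl | rfl⟩ := hε v <;>
    have hp := hsq_pos φ₁ w <;> have hq := hsq_pos φ₂ w <;>
    simp only [coe_mul, coe_pow, _root_.Units.val_neg, map_neg, map_mul, map_pow] at hv₁ hv₂ <;>
    nlinarith [mul_pos hp hq]
  obtain ⟨w, rfl | rfl | rfl | rfl⟩ := hε z <;>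
  have hp := hsq_pos φ₁ w <;> have hq := hsq_pos φ₂ w
  · exact ⟨w, sq w⟩
  all_goals
    simp only [coe_mul, coe_pow, _root_.Units.val_neg, map_neg, map_mul, map_pow] at hz₁ hz₂
    nlinarith [mul_pos hp hq]

end Units

end NumberField

/-- let `k` be a real quadratic field with trivial narrow ideal class
group.  Then the obstruction group `B_S = V_S/(k^×)²` is trivial for every finite set
`S` of finite primes of `k` not lying over 2: every `a ∈ k^×` such that `aO_k` is the
square of a fractional ideal and `a` is a square in `k_𝔭^×` for all `𝔭 ∈ S` and at
both real primes (i.e. `a` is totally positive) is a square in `k^×`. -/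
theorem BS_trivial_of_narrow_class_one (k : Type) [Field k] [NumberField k]
    (hdeg : Module.finrank ℚ k = 2)
    (hreal : ∀ v : InfinitePlace k, v.IsReal)
    (hnarrow : ∀ I : Ideal (𝓞 k), I ≠ ⊥ →
      ∃ g : 𝓞 k, I = Ideal.span {g} ∧ ∀ φ : k →+* ℝ, 0 < φ (algebraMap (𝓞 k) k g)) :
    ∀ S : Finset (HeightOneSpectrum (𝓞 k)),
      (∀ v ∈ S, (2 : 𝓞 k) ∉ v.asIdeal) →
      ∀ a : k, a ≠ 0 →
        (∃ J : FractionalIdeal (nonZeroDivisors (𝓞 k)) k,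
          FractionalIdeal.spanSingleton (nonZeroDivisors (𝓞 k)) a = J ^ 2) →
        (∀ v ∈ S, IsSquare (algebraMap k (v.adicCompletion k) a)) →
        (∀ φ : k →+* ℝ, 0 < φ a) →
        IsSquare a := by
  intro _ _ a _ ⟨J, hJ⟩ _ ha_pos
  have : IsTotallyReal k := ⟨hreal⟩
  have : IsPrincipalIdealRing (𝓞 k) := ⟨fun I => by
    rcases eq_or_ne I ⊥ with rfl | hI
    · exact bot_isPrincipal
    · obtain ⟨g, hg, -⟩ := hnarrow I hI
      exact ⟨g, hg⟩⟩
  obtain ⟨φ₁, φ₂, hφ⟩ := exists_ringHom_real_ne_of_one_lt_finrank (hdeg ▸ one_lt_two)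
  obtain ⟨v, hv₁, hv₂⟩ := exists_unit_neg_pos_of_ringHom_ne hnarrow hφ
  obtain ⟨u, b, rfl⟩ := FractionalIdeal.exists_unit_smul_pow_eq_of_spanSingleton_eq_pow hJ
  have hu_pos (φ : k →+* ℝ) : 0 < φ u := by
    have := ha_pos φ
    rw [Units.smul_def, Algebra.smul_def, map_mul, map_pow] at this
    exact pos_of_mul_pos_left this (sq_nonneg _)
  obtain ⟨w, rfl⟩ := Units.isSquare_of_pos_pos_of_neg_pos
    (Units.rank_eq_one_of_finrank_eq_two hdeg) hv₁ hv₂ (hu_pos φ₁) (hu_pos φ₂)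
  exact ⟨w * b, by rw [Units.smul_def, Algebra.smul_def, Units.val_mul, map_mul]; ring⟩
end

section
/- In k = ℚ(√5), let π_1 = 33 + 8√5, π_2 = 17, π_3 = (23 + 5√5)/2, and ε = (1+√5)/2 the fundamental unit. Then N_{k/ℚ}(π_1) = 769, N_{k/ℚ}(π_3) = 101, and π_1, π_2, π_3 generate distinct prime ideals of O_k with norms ≡ 1 mod 4; moreover each of ε, π_1, π_2, π_3 is a square modulo each of the prime ideals (π_i) for i distinct from its own index, i.e. the quadratic residue symbols (ε/π_i) = 1 for i = 1,2,3 and (π_i/π_j) = 1 for all 1 ≤ i ≠ j ≤ 3. -/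
/-!
Put `φ = ε`, so that `φ² = φ + 1`, `π₁ = 25 + 16φ`, `π₃ = 9 + 5φ` and `√5 = 2φ - 1 ∈ 𝓞 K`.
The norm form is `N(a + bφ) = a² + ab - b²`, so `π₁` and `π₃` have the prime norms `769` and
`101` and are prime. The rational prime `17` stays prime: a prime ideal of norm `17` above it
would have residue field `𝔽₁₇` containing the square root `2φ - 1` of `5`, but `5` is not a
square mod `17`. The three prime ideals have different norms, hence are distinct, and each
residue condition is witnessed by an explicit square root.
-/

open NumberField Module

theorem Algebra.norm_add_mul_of_sq_eq {F K : Type*} [Field F] [Field K] [Algebra F K]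
    (hK : finrank F K = 2) {s : K} {d : F} (hs : s ^ 2 = algebraMap F K d)
    (hsF : s ∉ Set.range (algebraMap F K)) (a b : F) :
    Algebra.norm F (algebraMap F K a + algebraMap F K b * s) = a ^ 2 - d * b ^ 2 := by
  have hli : LinearIndependent F ![(1 : K), s] := by
    rw [LinearIndependent.pair_iff]
    intro u v huv
    by_cases hv : v = 0
    · subst hv
      simpa using huv
    · refine absurd ⟨-u / v, ?_⟩ hsF
      rw [Algebra.smul_def, Algebra.smul_def, mul_one] at huv
      rw [map_div₀, map_neg, neg_div, neg_eq_iff_eq_neg, div_eq_iff (by simpa using hv)]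
      linear_combination huv
  let B : Basis (Fin 2) F K := basisOfLinearIndependentOfCardEqFinrank hli (by simp [hK])
  obtain ⟨hB₀, hB₁⟩ : B 0 = 1 ∧ B 1 = s := by
    simp [B, coe_basisOfLinearIndependentOfCardEqFinrank]
  set x := algebraMap F K a + algebraMap F K b * s
  have hx₀ : x * B 0 = a • B 0 + b • B 1 := by
    simp only [hB₀, hB₁, Algebra.smul_def, x]; ring
  have hx₁ : x * B 1 = (d * b) • B 0 + a • B 1 := by
    simp only [hB₀, hB₁, Algebra.smul_def, x, map_mul]; linear_combination algebraMap F K b * hs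
  rw [Algebra.norm_eq_matrix_det B, Matrix.det_fin_two]
  simp only [Algebra.leftMulMatrix_eq_repr_mul, hx₀, hx₁, map_add, map_smul, B.repr_self,
    Finsupp.smul_single, Finsupp.coe_add, Pi.add_apply, Finsupp.single_apply, smul_eq_mul]
  norm_num
  ring

theorem prime_of_natAbs_norm_prime {S : Type*} [CommRing S] [IsDedekindDomain S]
    [Module.Free ℤ S] [Module.Finite ℤ S] {x : S} (hx : (Algebra.norm ℤ x).natAbs.Prime) :
    Prime x := by
  refine Ideal.prime_of_irreducible_absNorm_span (fun h ↦ ?_) ?_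
  · simp [h, Nat.not_prime_zero] at hx
  · rwa [Ideal.absNorm_span_singleton, Nat.irreducible_iff_nat_prime]

theorem isSquare_intCast_of_absNorm_eq_prime {S : Type*} [CommRing S] [IsDedekindDomain S]
    [Module.Free ℤ S] [Module.Finite ℤ S] {P : Ideal S} {p : ℕ} (hp : p.Prime)
    (hP : Ideal.absNorm P = p) {r : S} {d : ℤ} (hr : r ^ 2 = d) : IsSquare (d : ZMod p) := by
  have hcard : Nat.card (S ⧸ P) = p := by rw [← hP, Ideal.absNorm_apply, Submodule.cardQuot_apply]
  have : Finite (S ⧸ P) := Nat.finite_of_card_ne_zero (hcard ▸ hp.ne_zero)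
  let _ := Fintype.ofFinite (S ⧸ P)
  let e := ZMod.ringEquivOfPrime (S ⧸ P) hp (Nat.card_eq_fintype_card (α := S ⧸ P) ▸ hcard)
  refine ⟨e.symm (Ideal.Quotient.mk P r), ?_⟩
  rw [← map_mul, ← map_mul, ← sq, hr, map_intCast, map_intCast]

theorem prime_natCast_of_sq_eq_of_not_isSquare {S : Type*} [CommRing S] [IsDedekindDomain S]
    [Module.Free ℤ S] [Module.Finite ℤ S] (hS : finrank ℤ S = 2) {p : ℕ} (hp : p.Prime)
    {r : S} {d : ℤ} (hr : r ^ 2 = d) (hd : ¬ IsSquare (d : ZMod p)) : Prime (p : S) := by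
  have hnorm : Ideal.absNorm (Ideal.span {(p : S)}) = p ^ 2 := by
    rw [Ideal.absNorm_span_natCast, hS]
  have hp₀ : (p : S) ≠ 0 := by
    intro h
    rw [h, Ideal.span_singleton_eq_bot.mpr rfl, Ideal.absNorm_bot] at hnorm
    exact pow_ne_zero 2 hp.ne_zero hnorm.symm
  have hne_top : Ideal.span {(p : S)} ≠ ⊤ := by
    rw [Ne, ← Ideal.absNorm_eq_one_iff, hnorm]
    exact (Nat.one_lt_pow two_ne_zero hp.one_lt).ne'
  obtain ⟨P, hPmax, hle⟩ := Ideal.exists_le_maximal _ hne_top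
  obtain ⟨k, hk, hPk⟩ := (Nat.dvd_prime_pow hp).mp (hnorm ▸ Ideal.absNorm_dvd_absNorm_of_le hle)
  obtain rfl | rfl | rfl : k = 0 ∨ k = 1 ∨ k = 2 := by omega
  · exact absurd (Ideal.absNorm_eq_one_iff.mp (pow_zero p ▸ hPk)) hPmax.ne_top
  · exact absurd (isSquare_intCast_of_absNorm_eq_prime hp (pow_one p ▸ hPk) hr) hd
  · obtain ⟨Q, hQ⟩ := Ideal.dvd_iff_le.mpr hle
    have hQ₁ : Ideal.absNorm Q = 1 := by
      have := hnorm ▸ congrArg Ideal.absNorm hQ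
      rw [map_mul, hPk] at this
      simpa [hp.ne_zero] using this.symm
    rw [Ideal.absNorm_eq_one_iff.mp hQ₁, Ideal.mul_top] at hQ
    exact (Ideal.span_singleton_prime hp₀).mp (hQ ▸ hPmax.isPrime)

theorem norm_intCast_add_mul_of_sq_eq_add_one {K : Type*} [Field K] [NumberField K]
    (hK : finrank ℚ K = 2) {φ : 𝓞 K} (hφ : φ ^ 2 = φ + 1) (a b : ℤ) :
    Algebra.norm ℤ (a + b * φ) = a ^ 2 + a * b - b ^ 2 := by
  set s : K := 2 * φ - 1
  have hs : s ^ 2 = algebraMap ℚ K 5 := by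
    have := congrArg (algebraMap (𝓞 K) K) hφ
    simp only [map_pow, map_add, map_one] at this
    simp only [s, map_ofNat]
    linear_combination 4 * this
  have hsQ : s ∉ Set.range (algebraMap ℚ K) := by
    rintro ⟨q, hq⟩
    refine (by norm_num : ¬ IsSquare (5 : ℚ)) ⟨q, (algebraMap ℚ K).injective ?_⟩
    rw [map_mul, hq, ← sq, hs]
  apply Int.cast_injective (α := ℚ)
  rw [Algebra.coe_norm_int]
  have hx : ((a + b * φ : 𝓞 K) : K)
      = algebraMap ℚ K (a + b / 2) + algebraMap ℚ K (b / 2) * s := by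
    simp only [s, map_add, map_mul, map_intCast, map_div₀, map_ofNat]
    field_simp
    ring
  rw [hx, Algebra.norm_add_mul_of_sq_eq hK hs hsQ]
  push_cast
  ring

/- The square roots and cofactors were found by a computer search; each identity holds modulo
`φ² = φ + 1`. -/
theorem borromean_residues_of_sq_eq_add_one {R : Type*} [CommRing R] {φ : R} (hφ : φ ^ 2 = φ + 1) :
    let π₁ := 25 + 16 * φ
    let π₂ : R := 17
    let π₃ := 9 + 5 * φ
    ((∃ x, π₁ ∣ x ^ 2 - φ) ∧ (∃ x, π₂ ∣ x ^ 2 - φ) ∧ (∃ x, π₃ ∣ x ^ 2 - φ)) ∧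
    ((∃ x, π₂ ∣ x ^ 2 - π₁) ∧ (∃ x, π₁ ∣ x ^ 2 - π₂) ∧
      (∃ x, π₃ ∣ x ^ 2 - π₁) ∧ (∃ x, π₁ ∣ x ^ 2 - π₃) ∧
      (∃ x, π₃ ∣ x ^ 2 - π₂) ∧ (∃ x, π₂ ∣ x ^ 2 - π₃)) :=
  ⟨⟨⟨307, 5025 - 1961 * φ, by linear_combination 31376 * hφ⟩,
    ⟨28 * φ - 7, 49 + 23 * φ, by linear_combination 784 * hφ⟩,
    ⟨33, 151 - 54 * φ, by linear_combination 270 * hφ⟩⟩,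
   ⟨⟨14 * φ - 4, 11 + 4 * φ, by linear_combination 196 * hφ⟩,
    ⟨111, 656 - 256 * φ, by linear_combination 4096 * hφ⟩,
    ⟨28, 106 - 39 * φ, by linear_combination 195 * hφ⟩,
    ⟨235, 2944 - 1149 * φ, by linear_combination 18384 * hφ⟩,
    ⟨44, 266 - 95 * φ, by linear_combination 475 * hφ⟩,
    ⟨26 * φ - 8, 43 + 15 * φ, by linear_combination 676 * hφ⟩⟩⟩

theorem borromean_primes_example_general
    (K : Type) [Field K] [NumberField K]
    (hdeg : Module.finrank ℚ K = 2)
    (s : K) (hs : s ^ 2 = 5)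
    (ε : (𝓞 K)ˣ)
    (hεval : algebraMap (𝓞 K) K (ε : 𝓞 K) = (1 + s) / 2)
    (π₁ π₂ π₃ : 𝓞 K)
    (h1 : algebraMap (𝓞 K) K π₁ = 33 + 8 * s)
    (h2 : algebraMap (𝓞 K) K π₂ = 17)
    (h3 : algebraMap (𝓞 K) K π₃ = (23 + 5 * s) / 2) :
    Algebra.norm ℚ (algebraMap (𝓞 K) K π₁) = 769 ∧
    Algebra.norm ℚ (algebraMap (𝓞 K) K π₃) = 101 ∧
    (Prime π₁ ∧ Prime π₂ ∧ Prime π₃) ∧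
    (Ideal.span {π₁} ≠ Ideal.span ({π₂} : Set (𝓞 K)) ∧
      Ideal.span {π₁} ≠ Ideal.span ({π₃} : Set (𝓞 K)) ∧
      Ideal.span {π₂} ≠ Ideal.span ({π₃} : Set (𝓞 K))) ∧
    (Algebra.norm ℤ π₁ % 4 = 1 ∧ Algebra.norm ℤ π₂ % 4 = 1 ∧ Algebra.norm ℤ π₃ % 4 = 1) ∧
    ((∃ x : 𝓞 K, π₁ ∣ (x ^ 2 - (ε : 𝓞 K))) ∧
      (∃ x : 𝓞 K, π₂ ∣ (x ^ 2 - (ε : 𝓞 K))) ∧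
      (∃ x : 𝓞 K, π₃ ∣ (x ^ 2 - (ε : 𝓞 K)))) ∧
    ((∃ x : 𝓞 K, π₂ ∣ (x ^ 2 - π₁)) ∧ (∃ x : 𝓞 K, π₁ ∣ (x ^ 2 - π₂)) ∧
      (∃ x : 𝓞 K, π₃ ∣ (x ^ 2 - π₁)) ∧ (∃ x : 𝓞 K, π₁ ∣ (x ^ 2 - π₃)) ∧
      (∃ x : 𝓞 K, π₃ ∣ (x ^ 2 - π₂)) ∧ (∃ x : 𝓞 K, π₂ ∣ (x ^ 2 - π₃))) := by
  set φ : 𝓞 K := ↑ε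
  have hφ : φ ^ 2 = φ + 1 := RingOfIntegers.coe_injective <| by
    simp only [map_pow, map_add, map_one, hεval]; linear_combination hs / 4
  have e₁ : π₁ = 25 + 16 * φ := RingOfIntegers.coe_injective <| by
    simp only [h1, map_add, map_mul, map_ofNat, hεval]; ring
  have e₂ : π₂ = 17 := RingOfIntegers.coe_injective <| by simp only [h2, map_ofNat]
  have e₃ : π₃ = 9 + 5 * φ := RingOfIntegers.coe_injective <| by
    simp only [h3, map_add, map_mul, map_ofNat, hεval]; ring
  have hnorm := norm_intCast_add_mul_of_sq_eq_add_one hdeg hφ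
  have z₁ : Algebra.norm ℤ π₁ = 769 := by simpa [e₁] using hnorm 25 16
  have z₂ : Algebra.norm ℤ π₂ = 289 := by simpa [e₂] using hnorm 17 0
  have z₃ : Algebra.norm ℤ π₃ = 101 := by simpa [e₃] using hnorm 9 5
  have hπ₁ : Prime π₁ := prime_of_natAbs_norm_prime (by rw [z₁]; norm_num)
  have hπ₂ : Prime π₂ := by
    rw [e₂]
    exact prime_natCast_of_sq_eq_of_not_isSquare (p := 17) (RingOfIntegers.rank K ▸ hdeg)
      (by norm_num) (r := 2 * φ - 1) (d := 5) (by push_cast; linear_combination 4 * hφ) (by decide)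
  have hπ₃ : Prime π₃ := prime_of_natAbs_norm_prime (by rw [z₃]; norm_num)
  refine ⟨by rw [← Algebra.coe_norm_int, z₁]; norm_num,
    by rw [← Algebra.coe_norm_int, z₃]; norm_num, ⟨hπ₁, hπ₂, hπ₃⟩, ⟨fun h ↦ ?_, fun h ↦ ?_, fun h ↦ ?_⟩, by simp [z₁, z₂, z₃], ?_⟩
  · simpa [Ideal.absNorm_span_singleton, z₁, z₂] using congrArg Ideal.absNorm h
  · simpa [Ideal.absNorm_span_singleton, z₁, z₃] using congrArg Ideal.absNorm h
  · simpa [Ideal.absNorm_span_singleton, z₂, z₃] using congrArg Ideal.absNorm h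
  rw [e₁, e₂, e₃]
  exact borromean_residues_of_sq_eq_add_one hφ

/-- in `K = ℚ(√5)` with `ε = (1+√5)/2` the fundamental unit, the elements
`π₁ = 33 + 8√5`, `π₂ = 17`, `π₃ = (23 + 5√5)/2` of `𝓞 K` satisfy `N(π₁) = 769`,
`N(π₃) = 101`; they generate distinct prime ideals with norms `≡ 1 mod 4`; and all the
quadratic residue symbols `(ε/π_i) = 1` (`i = 1, 2, 3`) and `(π_i/π_j) = 1`
(`1 ≤ i ≠ j ≤ 3`) hold, i.e. each is a square modulo the relevant prime. -/
theorem borromean_primes_example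
    (K : Type) [Field K] [NumberField K]
    (hdeg : Module.finrank ℚ K = 2)
    (s : K) (hs : s ^ 2 = 5)
    (ε : (𝓞 K)ˣ)
    (hεval : algebraMap (𝓞 K) K (ε : 𝓞 K) = (1 + s) / 2)
    (hεfund : ∀ u : (𝓞 K)ˣ, ∃ n : ℤ, u = ε ^ n ∨ u = -ε ^ n)
    (π₁ π₂ π₃ : 𝓞 K)
    (h1 : algebraMap (𝓞 K) K π₁ = 33 + 8 * s)
    (h2 : algebraMap (𝓞 K) K π₂ = 17)
    (h3 : algebraMap (𝓞 K) K π₃ = (23 + 5 * s) / 2) :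
    Algebra.norm ℚ (algebraMap (𝓞 K) K π₁) = 769 ∧
    Algebra.norm ℚ (algebraMap (𝓞 K) K π₃) = 101 ∧
    (Prime π₁ ∧ Prime π₂ ∧ Prime π₃) ∧
    (Ideal.span {π₁} ≠ Ideal.span ({π₂} : Set (𝓞 K)) ∧
      Ideal.span {π₁} ≠ Ideal.span ({π₃} : Set (𝓞 K)) ∧
      Ideal.span {π₂} ≠ Ideal.span ({π₃} : Set (𝓞 K))) ∧
    (Algebra.norm ℤ π₁ % 4 = 1 ∧ Algebra.norm ℤ π₂ % 4 = 1 ∧ Algebra.norm ℤ π₃ % 4 = 1) ∧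
    ((∃ x : 𝓞 K, π₁ ∣ (x ^ 2 - (ε : 𝓞 K))) ∧
      (∃ x : 𝓞 K, π₂ ∣ (x ^ 2 - (ε : 𝓞 K))) ∧
      (∃ x : 𝓞 K, π₃ ∣ (x ^ 2 - (ε : 𝓞 K)))) ∧
    ((∃ x : 𝓞 K, π₂ ∣ (x ^ 2 - π₁)) ∧ (∃ x : 𝓞 K, π₁ ∣ (x ^ 2 - π₂)) ∧
      (∃ x : 𝓞 K, π₃ ∣ (x ^ 2 - π₁)) ∧ (∃ x : 𝓞 K, π₁ ∣ (x ^ 2 - π₃)) ∧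
      (∃ x : 𝓞 K, π₃ ∣ (x ^ 2 - π₂)) ∧ (∃ x : 𝓞 K, π₂ ∣ (x ^ 2 - π₃))) :=
  borromean_primes_example_general K hdeg s hs ε hεval π₁ π₂ π₃ h1 h2 h3
end

section
/- Let F be a free group on x_1, x_2 and let N be the normal closure in F of {x_1², x_2²}. Then N[F,F] = F²[F,F], and the quotient N[F,F]/N[[F,F],F] is a cyclic group of order at most 2 generated by the image of the commutator [x_1, x_2]; in particular [x_1, x_2]² ∈ N[[F,F],F]. -/
open scoped commutatorElement

/-- The free group on two generators `x₁, x₂`. -/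
abbrev F₂free : Type := FreeGroup (Fin 2)

/-- `x₁`. -/
def x₁ : F₂free := FreeGroup.of 0
/-- `x₂`. -/
def x₂ : F₂free := FreeGroup.of 1

/-- `N`, the normal closure of `{x₁², x₂²}` in `F`. -/
def Nsub : Subgroup F₂free := Subgroup.normalClosure {x₁ ^ 2, x₂ ^ 2}

/-- `[F, F]`, the commutator subgroup. -/
def Csub : Subgroup F₂free := ⁅(⊤ : Subgroup F₂free), (⊤ : Subgroup F₂free)⁆

/-- `[[F, F], F]`. -/
def C₂sub : Subgroup F₂free := ⁅Csub, (⊤ : Subgroup F₂free)⁆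

/-!
Modulo `[F,F]` the group `F` is abelian, so `g ↦ g²` is multiplicative there and every square
is a product of `x₁²` and `x₂²`; this gives `N[F,F] = F²[F,F]`. Modulo `M = N[[F,F],F]`
commutators are central, so `[F,F]` maps into the cyclic group generated by the image `t` of
`[x₁,x₂]`: that cyclic group is normal and contains the commutators `1, t^{±1}` of the
generators. Finally `[x₁,x₂]² = [[x₁,x₂],x₁] · [x₁²,x₂]` with `[x₁²,x₂] ∈ N` shows `t² = 1`.
-/

open Subgroup

section

variable {G : Type*} [Group G]

theorem commutatorElement_sq (x y : G) : ⁅x, y⁆ ^ 2 = ⁅⁅x, y⁆, x⁆ * ⁅x ^ 2, y⁆ := by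
  simp only [commutatorElement_def, pow_two]
  group

theorem sq_mem_of_closure_eq_top {S : Set G} (hS : closure S = ⊤) {H : Subgroup G}
    (hH : commutator G ≤ H) (hsq : ∀ s ∈ S, s ^ 2 ∈ H) (g : G) : g ^ 2 ∈ H := by
  have hg : g ∈ closure S := hS ▸ mem_top g
  induction hg using closure_induction with
  | mem s hs => exact hsq s hs
  | one => simp
  | mul a b _ _ ha hb =>
    have hab : (a * b) ^ 2 = a ^ 2 * ⁅a⁻¹, b⁆ * b ^ 2 := by
      simp only [commutatorElement_def, pow_two]
      group
    rw [hab]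
    exact H.mul_mem (H.mul_mem ha (hH (commutator_mem_commutator (mem_top _) (mem_top _)))) hb
  | inv a _ ha =>
    rw [inv_pow]
    exact H.inv_mem ha

theorem normalClosure_le_closure_range_sq {s : Set G} (hs : s ⊆ Set.range fun g : G => g ^ 2) :
    normalClosure s ≤ closure (Set.range fun g : G => g ^ 2) := by
  refine closure_mono fun x hx => ?_
  obtain ⟨_, ha, hconj⟩ := Group.mem_conjugatesOfSet_iff.1 hx
  obtain ⟨c, rfl⟩ := isConj_iff.1 hconj
  obtain ⟨b, rfl⟩ := hs ha
  exact ⟨c * b * c⁻¹, by simp only [pow_two]; group⟩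

theorem QuotientGroup.commute_mk_iff {K : Subgroup G} [K.Normal] (a b : G) :
    Commute (a : G ⧸ K) b ↔ ⁅a, b⁆ ∈ K := by
  rw [← commutatorElement_eq_one_iff_commute, ← QuotientGroup.eq_one_iff]
  exact Iff.of_eq (congrArg (· = 1) (map_commutatorElement (QuotientGroup.mk' K) a b).symm)

theorem commutator_le_of_closure_eq_top {S : Set G} (hS : closure S = ⊤) {K : Subgroup G}
    [K.Normal] (hK : ∀ a ∈ S, ∀ b ∈ S, ⁅a, b⁆ ∈ K) : commutator G ≤ K := by
  have hQ : IsMulCommutative (closure (QuotientGroup.mk' K '' S)) :=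
    isMulCommutative_closure <| by
      rintro _ ⟨a, ha, rfl⟩ _ ⟨b, hb, rfl⟩
      exact ((QuotientGroup.commute_mk_iff a b).2 (hK a ha b hb)).eq
  rw [← MonoidHom.map_closure, hS, map_top_of_surjective _ (QuotientGroup.mk'_surjective K)]
    at hQ
  refine commutator_le.2 fun a _ b _ => (QuotientGroup.commute_mk_iff a b).1 ?_
  exact congrArg Subtype.val (hQ.is_comm.comm ⟨(a : G ⧸ K), mem_top _⟩ ⟨b, mem_top _⟩)

theorem QuotientGroup.mk_commutatorElement_mem_center {M : Subgroup G} [M.Normal]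
    (hM : ⁅commutator G, ⊤⁆ ≤ M) (a b : G) : ((⁅a, b⁆ : G) : G ⧸ M) ∈ center (G ⧸ M) :=
  mem_center_iff.2 fun c => QuotientGroup.induction_on c fun c =>
    ((QuotientGroup.commute_mk_iff _ c).2 (hM (commutator_mem_commutator
      (commutator_mem_commutator (mem_top a) (mem_top b)) (mem_top c)))).symm.eq

theorem zpowers_normal_of_mem_center {t : G} (ht : t ∈ center G) : (zpowers t).Normal :=
  ⟨fun x hx g => by rwa [mem_center_iff.1 (zpowers_le.2 ht hx) g, mul_inv_cancel_right]⟩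

theorem eq_one_or_eq_of_sq_eq_one_of_mem_zpowers {t x : G} (ht : t ^ 2 = 1)
    (hx : x ∈ zpowers t) : x = 1 ∨ x = t := by
  obtain ⟨k, rfl⟩ := mem_zpowers_iff.1 hx
  obtain ⟨m, rfl | rfl⟩ := Int.even_or_odd' k
  · simp [zpow_mul, ht]
  · simp [zpow_add, zpow_mul, ht]

end

instance : Nsub.Normal := normalClosure_normal

instance : Csub.Normal := commutator_normal _ _

instance : C₂sub.Normal := commutator_normal _ _

theorem of_sq_mem_Nsub (i : Fin 2) : FreeGroup.of i ^ 2 ∈ Nsub := by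
  apply subset_normalClosure
  fin_cases i <;> simp [x₁, x₂]

theorem Nsub_sup_Csub_eq_closure_sq_sup_Csub :
    Nsub ⊔ Csub = closure (Set.range fun g : F₂free => g ^ 2) ⊔ Csub := by
  refine le_antisymm (sup_le_sup_right ?_ _) (sup_le ((closure_le _).2 ?_) le_sup_right)
  · exact normalClosure_le_closure_range_sq (by rintro _ (rfl | rfl) <;> exact ⟨_, rfl⟩)
  · rintro _ ⟨g, rfl⟩
    refine sq_mem_of_closure_eq_top (FreeGroup.closure_range_of _) le_sup_right ?_ g
    rintro _ ⟨i, rfl⟩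
    exact mem_sup_left (of_sq_mem_Nsub i)

theorem commutatorElement_x₁_x₂_sq_mem : ⁅x₁, x₂⁆ ^ 2 ∈ Nsub ⊔ C₂sub := by
  rw [commutatorElement_sq]
  refine mul_mem (mem_sup_right ?_) (mem_sup_left ?_)
  · exact commutator_mem_commutator (commutator_mem_commutator (mem_top _) (mem_top _))
      (mem_top _)
  · exact commutator_le_left Nsub ⊤ (commutator_mem_commutator (of_sq_mem_Nsub 0) (mem_top _))

theorem mk_mem_zpowers_of_mem_Nsub_sup_Csub {g : F₂free} (hg : g ∈ Nsub ⊔ Csub) :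
    (g : F₂free ⧸ (Nsub ⊔ C₂sub)) ∈ zpowers ((⁅x₁, x₂⁆ : F₂free) : F₂free ⧸ (Nsub ⊔ C₂sub)) := by
  have := zpowers_normal_of_mem_center
    (QuotientGroup.mk_commutatorElement_mem_center (M := Nsub ⊔ C₂sub) le_sup_right x₁ x₂)
  suffices hle : Nsub ⊔ Csub ≤ comap (QuotientGroup.mk' (Nsub ⊔ C₂sub)) (zpowers _) from hle hg
  refine sup_le (fun n hn => ?_)
    (commutator_le_of_closure_eq_top (FreeGroup.closure_range_of _) ?_)
  · rw [mem_comap, QuotientGroup.mk'_apply, (QuotientGroup.eq_one_iff n).2 (mem_sup_left hn)]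
    exact one_mem _
  · rintro _ ⟨i, rfl⟩ _ ⟨j, rfl⟩
    fin_cases i <;> fin_cases j
    · rw [commutatorElement_self]
      exact one_mem _
    · exact mem_zpowers _
    · rw [mem_comap]
      show QuotientGroup.mk' (Nsub ⊔ C₂sub) ⁅x₂, x₁⁆ ∈ _
      rw [← commutatorElement_inv x₁ x₂, map_inv]
      exact inv_mem (mem_zpowers _)
    · rw [commutatorElement_self]
      exact one_mem _

/-- for the free group `F` on `x₁, x₂` and `N` the normal closure of
`{x₁², x₂²}`, one has `N[F,F] = F²[F,F]`, and `N[F,F]/N[[F,F],F]` is cyclic of order at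
most 2, generated by the image of `[x₁, x₂]`; in particular `[x₁,x₂]² ∈ N[[F,F],F]`. -/
theorem redei_uniqueness_group_core :
    (Nsub ⊔ Csub
      = Subgroup.closure (Set.range fun g : F₂free => g ^ 2) ⊔ Csub) ∧
    ⁅x₁, x₂⁆ ∈ Nsub ⊔ Csub ∧
    (∀ g ∈ Nsub ⊔ Csub, g ∈ Nsub ⊔ C₂sub ∨ ⁅x₁, x₂⁆⁻¹ * g ∈ Nsub ⊔ C₂sub) ∧
    ⁅x₁, x₂⁆ ^ 2 ∈ Nsub ⊔ C₂sub := by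
  refine ⟨Nsub_sup_Csub_eq_closure_sq_sup_Csub,
    mem_sup_right (commutator_mem_commutator (mem_top _) (mem_top _)),
    fun g hg => ?_, commutatorElement_x₁_x₂_sq_mem⟩
  have ht : ((⁅x₁, x₂⁆ : F₂free) : F₂free ⧸ (Nsub ⊔ C₂sub)) ^ 2 = 1 := by
    rw [← QuotientGroup.mk_pow, QuotientGroup.eq_one_iff]
    exact commutatorElement_x₁_x₂_sq_mem
  rcases eq_one_or_eq_of_sq_eq_one_of_mem_zpowers ht (mk_mem_zpowers_of_mem_Nsub_sup_Csub hg)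
    with h | h
  · exact Or.inl ((QuotientGroup.eq_one_iff g).1 h)
  · exact Or.inr (QuotientGroup.eq.1 h.symm)
end
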